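/- arXiv:1912.11779 — 2 statements merged into one kernel-verified Lean document; each statement's English description precedes it below -/
import Mathlib

section
/- Let Λ(θ) = −∫₀^θ log|2 sin t| dt be the Lobachevsky function. Then for every real θ, Λ(θ) ≤ Λ(π/6), with equality if and only if θ ≡ π/6 (mod π). -/
open Real

/-- The Lobachevsky function `Λ(θ) = −∫₀^θ log|2 sin t| dt`. -/
noncomputable def lobachevsky (θ : ℝ) : ℝ :=
  -∫ t in (0 : ℝ)..θ, Real.log |2 * Real.sin t|

section LobachevskyAux

open MeasureTheory intervalIntegral Set

noncomputable def lf (t : ℝ) : ℝ := Real.log |2 * Real.sin t|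

lemma lf_per : Function.Periodic lf π := by
  intro t
  simp [lf, Real.sin_add_pi, abs_mul]

lemma neg_log_le (t : ℝ) (ht : 0 < t) : -Real.log t ≤ 2 * t ^ (-(1/2) : ℝ) := by
  have h1 : Real.log (t ^ (-(1/2) : ℝ)) = -(1/2) * Real.log t := Real.log_rpow ht _
  have h2 : Real.log (t ^ (-(1/2) : ℝ)) ≤ t ^ (-(1/2) : ℝ) - 1 :=
    Real.log_le_sub_one_of_pos (Real.rpow_pos_of_pos ht _)
  have h3 : (0:ℝ) < t ^ (-(1/2) : ℝ) := Real.rpow_pos_of_pos ht _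
  nlinarith

lemma lf_int_half : IntervalIntegrable lf volume 0 (π/2) := by
  have hπ : (0:ℝ) < π := Real.pi_pos
  have hg : IntervalIntegrable
      (fun t : ℝ => (Real.log 2 + Real.log (π/2)) + 2 * t ^ (-(1/2) : ℝ)) volume 0 (π/2) := by
    exact intervalIntegrable_const.add
      ((intervalIntegral.intervalIntegrable_rpow' (by norm_num)).const_mul 2)
  apply hg.mono_fun'
  · exact ((Real.measurable_log.comp
      ((measurable_const.mul Real.measurable_sin).abs)).aestronglyMeasurable)
  · rw [Filter.EventuallyLE, uIoc_of_le (by positivity : (0:ℝ) ≤ π/2),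
      ae_restrict_iff' measurableSet_Ioc]
    filter_upwards with t ht
    obtain ⟨ht0, ht2⟩ := ht
    have hsin : 0 < Real.sin t := Real.sin_pos_of_pos_of_lt_pi ht0 (by linarith)
    have hsin1 : Real.sin t ≤ 1 := Real.sin_le_one t
    have habs : |2 * Real.sin t| = 2 * Real.sin t := abs_of_pos (by linarith)
    have hlog : lf t = Real.log 2 + Real.log (Real.sin t) := by
      rw [lf, habs, Real.log_mul (by norm_num) hsin.ne']
    have hb : Real.log (Real.sin t) ≤ 0 := Real.log_nonpos hsin.le hsin1
    have h2 : (0:ℝ) ≤ Real.log 2 := Real.log_nonneg (by norm_num)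
    have hnorm : ‖lf t‖ ≤ Real.log 2 - Real.log (Real.sin t) := by
      rw [hlog, Real.norm_eq_abs, abs_le]; constructor <;> linarith
    have hlb : 2/π * t ≤ Real.sin t := Real.mul_le_sin ht0.le ht2
    have hlb' : Real.log (2/π * t) ≤ Real.log (Real.sin t) :=
      Real.log_le_log (by positivity) hlb
    have hsplit : Real.log (2/π * t) = Real.log 2 - Real.log π + Real.log t := by
      rw [Real.log_mul (by positivity) ht0.ne', Real.log_div (by norm_num) hπ.ne']
    have hneg : -Real.log t ≤ 2 * t ^ (-(1/2) : ℝ) := neg_log_le t ht0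
    have hπ2 : Real.log (π/2) = Real.log π - Real.log 2 := Real.log_div hπ.ne' (by norm_num)
    simp only [Real.norm_eq_abs] at hnorm ⊢
    calc |lf t| ≤ Real.log 2 - Real.log (Real.sin t) := hnorm
      _ ≤ Real.log 2 - (Real.log 2 - Real.log π + Real.log t) := by linarith
      _ ≤ (Real.log 2 + Real.log (π/2)) + 2 * t ^ (-(1/2) : ℝ) := by
          rw [hπ2]; linarith [Real.log_nonneg (by norm_num : (1:ℝ) ≤ 2)]

lemma lf_pi_sub (x : ℝ) : lf (π - x) = lf x := by
  simp [lf, Real.sin_pi_sub]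

lemma lf_int_pi : IntervalIntegrable lf volume 0 π := by
  have h2 : IntervalIntegrable lf volume (π/2) π := by
    have := (lf_int_half.comp_sub_left π).symm
    have he : (fun x => lf (π - x)) = lf := funext lf_pi_sub
    rw [he] at this
    have h0 : π - 0 = π := by ring
    have hh : π - π/2 = π/2 := by ring
    rw [h0, hh] at this
    exact this
  exact lf_int_half.trans h2

lemma lf_int (a b : ℝ) : IntervalIntegrable lf volume a b := by
  have hπ : (0:ℝ) < π := Real.pi_pos
  have hshift : ∀ a b : ℝ, IntervalIntegrable lf volume a b →
      IntervalIntegrable lf volume (a + π) (b + π) := by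
    intro a b h
    have := h.comp_add_right (-π)
    have he : (fun x => lf (x + -π)) = lf := by
      funext x
      have h := lf_per (x - π)
      simp only [sub_add_cancel] at h
      calc lf (x + -π) = lf (x - π) := by ring_nf
        _ = lf x := h.symm
    rw [he] at this
    simpa using this
  have hshift' : ∀ a b : ℝ, IntervalIntegrable lf volume a b →
      IntervalIntegrable lf volume (a - π) (b - π) := by
    intro a b h
    have := h.comp_add_right π
    have he : (fun x => lf (x + π)) = lf := funext lf_per
    rw [he] at this
    exact this
  have hup : ∀ n : ℕ, IntervalIntegrable lf volume 0 (n * π) := by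
    intro n
    induction n with
    | zero => simp
    | succ n ih =>
        have hstep : IntervalIntegrable lf volume (n * π) ((n+1) * π) := by
          have : ∀ m : ℕ, IntervalIntegrable lf volume (m * π) (m * π + π) := by
            intro m
            induction m with
            | zero => simpa using lf_int_pi
            | succ m ihm =>
                have := hshift _ _ ihm
                convert this using 1 <;> push_cast <;> ring
          have h := this n
          have : ((n:ℝ)+1) * π = (n:ℝ) * π + π := by ring
          rw [this]
          exact_mod_cast h
        have : ((n:ℕ)+1 : ℝ) = ((n:ℝ)+1) := by push_cast; ring
        exact ih.trans (by exact_mod_cast hstep)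
  have hdown : ∀ n : ℕ, IntervalIntegrable lf volume (-(n * π)) 0 := by
    intro n
    induction n with
    | zero => simp
    | succ n ih =>
        have hstep : IntervalIntegrable lf volume (-((n+1) * π)) (-(n * π)) := by
          have : ∀ m : ℕ, IntervalIntegrable lf volume (-(m * π) - π) (-(m * π)) := by
            intro m
            induction m with
            | zero => simpa using hshift' _ _ lf_int_pi
            | succ m ihm =>
                have := hshift' _ _ ihm
                convert this using 1 <;> push_cast <;> ring
          have h := this n
          have e : -(((n:ℝ)+1) * π) = -((n:ℝ) * π) - π := by ring
          rw [e]
          exact_mod_cast h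
        exact (by exact_mod_cast hstep : IntervalIntegrable lf volume (-(((n:ℕ)+1:ℕ) * π)) (-((n:ℕ) * π))).trans ih
  obtain ⟨n, hn⟩ := exists_nat_gt ((|a| + |b|) / π)
  have hn' : |a| + |b| < n * π := by
    rwa [div_lt_iff₀ hπ] at hn
  have hbig : IntervalIntegrable lf volume (-(n * π)) (n * π) := (hdown n).trans (hup n)
  apply hbig.mono_set
  have hb0 : (0:ℝ) ≤ |a| + |b| := by positivity
  have ha1 : -(n * π) ≤ a := by
    have := neg_abs_le a
    have := abs_nonneg b
    nlinarith
  have ha2 : a ≤ n * π := by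
    have := le_abs_self a
    have := abs_nonneg b
    nlinarith
  have hb1 : -(n * π) ≤ b := by
    have := neg_abs_le b
    have := abs_nonneg a
    nlinarith
  have hb2 : b ≤ n * π := by
    have := le_abs_self b
    have := abs_nonneg a
    nlinarith
  rw [Set.uIcc_of_le (by nlinarith : -((n:ℝ) * π) ≤ (n:ℝ) * π)]
  exact Set.uIcc_subset_Icc ⟨ha1, ha2⟩ ⟨hb1, hb2⟩

lemma lf_cos (x : ℝ) : lf (π/2 - x) = Real.log |2 * Real.cos x| := by
  simp [lf, Real.sin_pi_div_two_sub]

lemma int_cos : IntervalIntegrable (fun x => Real.log |2 * Real.cos x|) volume 0 (π/2) := by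
  have := ((lf_int 0 (π/2)).comp_sub_left (π/2)).symm
  have he : (fun x => lf (π/2 - x)) = fun x => Real.log |2 * Real.cos x| := funext lf_cos
  rw [he] at this
  have h0 : π/2 - 0 = π/2 := by ring
  have hh : π/2 - π/2 = 0 := by ring
  rwa [h0, hh] at this

lemma J_cos : (∫ x in (0:ℝ)..(π/2), Real.log |2 * Real.cos x|) = ∫ x in (0:ℝ)..(π/2), lf x := by
  have := intervalIntegral.integral_comp_sub_left lf (π/2) (a := 0) (b := π/2)
  simp only [lf_cos] at this
  rw [this]
  norm_num

lemma half2 : (∫ x in (π/2:ℝ)..π, lf x) = ∫ x in (0:ℝ)..(π/2), lf x := by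
  have := intervalIntegral.integral_comp_sub_left lf π (a := 0) (b := π/2)
  simp only [lf_pi_sub] at this
  have e : π - π/2 = π/2 := by ring
  rw [e, sub_zero] at this
  exact this.symm

lemma doubling : (∫ s in (0:ℝ)..(π/2), lf (2*s))
    = ∫ s in (0:ℝ)..(π/2), (lf s + Real.log |2 * Real.cos s|) := by
  apply intervalIntegral.integral_congr_ae
  have h5 : ∀ᵐ x : ℝ, x ≠ π / 2 := by
    rw [MeasureTheory.ae_iff]
    have : {x : ℝ | ¬x ≠ π/2} = {π/2} := by ext x; simp
    rw [this]
    exact MeasureTheory.measure_singleton _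
  filter_upwards [h5] with x hx hmem
  rw [Set.uIoc_of_le (by positivity : (0:ℝ) ≤ π/2)] at hmem
  obtain ⟨hx0, hx2⟩ := hmem
  have hx2' : x < π/2 := lt_of_le_of_ne hx2 hx
  have hsin : 0 < Real.sin x := Real.sin_pos_of_pos_of_lt_pi hx0 (by linarith [Real.pi_pos])
  have hcos : 0 < Real.cos x := Real.cos_pos_of_mem_Ioo ⟨by linarith [Real.pi_pos], hx2'⟩
  have hkey : 2 * Real.sin (2*x) = (2 * Real.sin x) * (2 * Real.cos x) := by
    rw [Real.sin_two_mul]; ring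
  rw [lf, lf, hkey, abs_mul, Real.log_mul]
  · exact (abs_ne_zero).mpr (by positivity)
  · exact (abs_ne_zero).mpr (by positivity)

lemma lf_integral_pi : (∫ t in (0:ℝ)..π, lf t) = 0 := by
  set J := ∫ x in (0:ℝ)..(π/2), lf x with hJ
  have hsplit : (∫ t in (0:ℝ)..π, lf t) = J + J := by
    rw [← intervalIntegral.integral_add_adjacent_intervals (lf_int 0 (π/2)) (lf_int (π/2) π),
      half2]
  have hdoub : (∫ t in (0:ℝ)..π, lf t) = 2 * ∫ s in (0:ℝ)..(π/2), lf (2*s) := by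
    have h := intervalIntegral.mul_integral_comp_mul_left (f := lf) (c := 2) (a := 0) (b := π/2)
    have e1 : (2:ℝ) * 0 = 0 := by ring
    have e2 : (2:ℝ) * (π/2) = π := by ring
    rw [e1, e2] at h
    rw [← h]
  have h4 : (∫ t in (0:ℝ)..π, lf t) = 2 * (J + J) := by
    rw [hdoub, doubling, intervalIntegral.integral_add (lf_int 0 (π/2)) int_cos, J_cos]
  linarith [hsplit, h4]

lemma per_integral (a : ℝ) : (∫ t in a..(a+π), lf t) = 0 := by
  rw [lf_per.intervalIntegral_add_eq a 0]
  simpa using lf_integral_pi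

lemma zsmul_integral (k : ℤ) (a : ℝ) : (∫ t in a..(a + k * π), lf t) = 0 := by
  have := lf_per.intervalIntegral_add_zsmul_eq k a lf_int
  rw [zsmul_eq_mul] at this
  rw [this, per_integral, smul_zero]

lemma sin_gt_half {x : ℝ} (h1 : π/6 < x) (h2 : x < 5*π/6) : 1/2 < Real.sin x := by
  have hπ := Real.pi_pos
  have key : ∀ y : ℝ, π/6 < y → y ≤ π/2 → 1/2 < Real.sin y := by
    intro y hy1 hy2
    have := Real.strictMonoOn_sin (a := π/6) (b := y)
      ⟨by linarith, by linarith⟩ ⟨by linarith, hy2⟩ hy1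
    rwa [Real.sin_pi_div_six] at this
  rcases le_or_gt x (π/2) with hx | hx
  · exact key x h1 hx
  · have := key (π - x) (by linarith) (by linarith)
    rwa [Real.sin_pi_sub] at this

lemma sin_small_of_lt_pi_div_six {x : ℝ} (h1 : 0 < x) (h2 : x < π/6) :
    0 < Real.sin x ∧ Real.sin x < 1/2 := by
  have hπ := Real.pi_pos
  constructor
  · exact Real.sin_pos_of_pos_of_lt_pi h1 (by linarith)
  · have := Real.strictMonoOn_sin (a := x) (b := π/6)
      ⟨by linarith, by linarith⟩ ⟨by linarith, by linarith⟩ h2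
    rwa [Real.sin_pi_div_six] at this

lemma lf_pos_on {x : ℝ} (h1 : π/6 < x) (h2 : x < 5*π/6) : 0 < lf x := by
  have hπ := Real.pi_pos
  have hs := sin_gt_half h1 h2
  have habs : |2 * Real.sin x| = 2 * Real.sin x := abs_of_pos (by linarith)
  rw [lf, habs]
  exact Real.log_pos (by linarith)

lemma lf_neg_on {x : ℝ} (h1 : 5*π/6 < x) (h2 : x < 7*π/6) (h3 : x ≠ π) : lf x < 0 := by
  have hπ := Real.pi_pos
  have key : 0 < |2 * Real.sin x| ∧ |2 * Real.sin x| < 1 := by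
    rcases lt_trichotomy x π with hx | hx | hx
    · obtain ⟨hp, hlt⟩ := sin_small_of_lt_pi_div_six (x := π - x) (by linarith) (by linarith)
      rw [Real.sin_pi_sub] at hp hlt
      rw [abs_of_pos (by linarith)]
      constructor <;> linarith
    · exact absurd hx h3
    · obtain ⟨hp, hlt⟩ := sin_small_of_lt_pi_div_six (x := x - π) (by linarith) (by linarith)
      rw [Real.sin_sub_pi] at hp hlt
      have : Real.sin x < 0 := by linarith
      rw [abs_of_neg (by linarith : 2 * Real.sin x < 0)]
      constructor <;> linarith
  exact Real.log_neg key.1 key.2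

lemma int_neg {a b : ℝ} (ha : 5*π/6 ≤ a) (hab : a < b) (hb : b ≤ 7*π/6) (hne : π ∉ Set.Ioo a b) :
    (∫ t in a..b, lf t) < 0 := by
  have h := intervalIntegral_pos_of_pos_on (f := fun t => -lf t) (a := a) (b := b)
    ((lf_int a b).neg) (fun x hx => by
      have := lf_neg_on (x := x) (by linarith [hx.1]) (by linarith [hx.2])
        (fun hxpi => hne (hxpi ▸ hx))
      show (0:ℝ) < -lf x
      linarith) hab
  rw [intervalIntegral.integral_neg] at h
  linarith

lemma key_pos {θ : ℝ} (h1 : π/6 < θ) (h2 : θ < 7*π/6) : 0 < ∫ t in (π/6:ℝ)..θ, lf t := by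
  have hπ := Real.pi_pos
  rcases le_or_gt θ (5*π/6) with hθ | hθ
  · exact intervalIntegral_pos_of_pos_on (lf_int _ _)
      (fun x hx => lf_pos_on hx.1 (by linarith [hx.2])) h1
  · have hz : (∫ t in (π/6:ℝ)..(7*π/6), lf t) = 0 := by
      have := per_integral (π/6)
      have e : π/6 + π = 7*π/6 := by ring
      rwa [e] at this
    have hsplit : (∫ t in (π/6:ℝ)..θ, lf t) + (∫ t in θ..(7*π/6:ℝ), lf t)
        = ∫ t in (π/6:ℝ)..(7*π/6), lf t :=
      intervalIntegral.integral_add_adjacent_intervals (lf_int _ _) (lf_int _ _)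
    have htail : (∫ t in θ..(7*π/6:ℝ), lf t) < 0 := by
      rcases lt_or_ge θ π with hθπ | hθπ
      · have hsp : (∫ t in θ..(π:ℝ), lf t) + (∫ t in (π:ℝ)..(7*π/6), lf t)
            = ∫ t in θ..(7*π/6:ℝ), lf t :=
          intervalIntegral.integral_add_adjacent_intervals (lf_int _ _) (lf_int _ _)
        have h1' : (∫ t in θ..(π:ℝ), lf t) < 0 :=
          int_neg hθ.le hθπ (by linarith) (fun hmem => absurd hmem.2 (lt_irrefl π))
        have h2' : (∫ t in (π:ℝ)..(7*π/6), lf t) < 0 :=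
          int_neg (by linarith) (by linarith) le_rfl (fun hmem => absurd hmem.1 (lt_irrefl π))
        linarith
      · exact int_neg (by linarith) h2 le_rfl (fun hmem => by linarith [hmem.1])
    linarith

end LobachevskyAux

/-- `Λ` attains its maximum exactly at `θ ≡ π/6 (mod π)`. -/
theorem lobachevsky_max (θ : ℝ) :
    lobachevsky θ ≤ lobachevsky (π / 6) ∧
      (lobachevsky θ = lobachevsky (π / 6) ↔ ∃ k : ℤ, θ = π / 6 + k * π) := by
  have hπ := Real.pi_pos
  have hdiff : lobachevsky (π/6) - lobachevsky θ = ∫ t in (π/6:ℝ)..θ, lf t := by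
    have h := intervalIntegral.integral_add_adjacent_intervals
      (lf_int 0 (π/6)) (lf_int (π/6) θ)
    simp only [lobachevsky, lf] at h ⊢
    linarith
  set k : ℤ := ⌊(θ - π/6) / π⌋ with hk
  set r : ℝ := θ - π/6 - k * π with hr
  have hq : (θ - π/6) / π * π = θ - π/6 := div_mul_cancel₀ _ hπ.ne'
  have hfl : (k:ℝ) ≤ (θ - π/6) / π := Int.floor_le _
  have hfu : (θ - π/6) / π < k + 1 := Int.lt_floor_add_one _
  have hr0 : 0 ≤ r := by rw [hr]; nlinarith
  have hr1 : r < π := by rw [hr]; nlinarith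
  have hθeq : θ = (π/6 + r) + k * π := by rw [hr]; ring
  have hgper : (∫ t in (π/6:ℝ)..θ, lf t) = ∫ t in (π/6:ℝ)..(π/6 + r), lf t := by
    have hsp : (∫ t in (π/6:ℝ)..(π/6+r), lf t) + (∫ t in (π/6+r:ℝ)..((π/6+r) + k*π), lf t)
        = ∫ t in (π/6:ℝ)..((π/6+r) + k*π), lf t :=
      intervalIntegral.integral_add_adjacent_intervals (lf_int _ _) (lf_int _ _)
    rw [zsmul_integral k (π/6+r)] at hsp
    rw [hθeq, ← hsp, add_zero]
  clear_value k r
  rcases eq_or_lt_of_le hr0 with hrz | hrpos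
  · have hg0 : (∫ t in (π/6:ℝ)..θ, lf t) = 0 := by
      rw [hgper, ← hrz, add_zero, intervalIntegral.integral_same]
    have heq : lobachevsky θ = lobachevsky (π/6) := by linarith [hdiff, hg0]
    refine ⟨le_of_eq heq, ⟨fun _ => ⟨k, ?_⟩, fun _ => heq⟩⟩
    rw [hθeq, ← hrz]; ring
  · have hgpos : 0 < ∫ t in (π/6:ℝ)..θ, lf t := by
      rw [hgper]
      exact key_pos (by linarith) (by linarith)
    have hlt : lobachevsky θ < lobachevsky (π/6) := by linarith [hdiff]
    refine ⟨hlt.le, ⟨fun h => absurd h hlt.ne, fun h => ?_⟩⟩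
    exfalso
    obtain ⟨k', hk'⟩ := h
    have hmr : ((k' - k : ℤ) : ℝ) * π = r := by
      push_cast
      rw [hr, hk'] at *
      nlinarith [hk']
    rcases le_or_gt (k' - k) 0 with hm | hm
    · have : ((k' - k : ℤ) : ℝ) ≤ 0 := by exact_mod_cast hm
      nlinarith
    · have : (1:ℝ) ≤ ((k' - k : ℤ) : ℝ) := by exact_mod_cast hm
      nlinarith
end

section
/- The Lobachevsky function satisfies the identity Λ(π/6) = (3/2)·Λ(π/3). -/
open Real

/-!
Away from the zeros of `sin` and `cos`, a codiscrete set, `2 sin 2t = (2 sin t)(2 sin (t + π/2))`;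
integrating gives the distribution relation `Λ(2θ) = 2Λ(θ) + 2Λ(θ + π/2)`, once we know
`Λ(π/2) = 0`. That value and `Λ(π) = 0` follow from `∫₀^{π/2} log sin = −(π/2) log 2`, and `Λ(π) = 0`
makes `Λ` `π`-periodic. At `θ = π/6`, with `Λ(2π/3) = Λ(−π/3) = −Λ(π/3)`, the relation reads
`Λ(π/3) = 2Λ(π/6) − 2Λ(π/3)`.
-/

open MeasureTheory intervalIntegral

theorem intervalIntegrable_log_abs_two_mul_sin (a b : ℝ) :
    IntervalIntegrable (fun t => log |2 * sin t|) volume a b :=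
  (analyticOnNhd_const.mul analyticOnNhd_sin).meromorphicOn.intervalIntegrable_log_norm

theorem eventually_codiscrete_sin_ne_zero : ∀ᶠ t in Filter.codiscrete ℝ, sin t ≠ 0 :=
  analyticOnNhd_sin.preimage_zero_mem_codiscrete (x := π / 2) (by simp)

theorem eventually_codiscrete_cos_ne_zero : ∀ᶠ t in Filter.codiscrete ℝ, cos t ≠ 0 :=
  analyticOnNhd_cos.preimage_zero_mem_codiscrete (x := 0) (by simp)

theorem integral_congr_codiscrete {a b : ℝ} {f g : ℝ → ℝ} (h : f =ᶠ[Filter.codiscrete ℝ] g) :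
    ∫ x in a..b, f x = ∫ x in a..b, g x :=
  integral_congr_codiscreteWithin (Filter.codiscreteWithin_mono (Set.subset_univ _) h)

theorem integral_log_abs_two_mul_sin (a b : ℝ) :
    ∫ t in a..b, log |2 * sin t| = (b - a) * log 2 + ∫ t in a..b, log (sin t) := by
  have h : (fun t => log |2 * sin t|) =ᶠ[Filter.codiscrete ℝ] fun t => log 2 + log (sin t) := by
    filter_upwards [eventually_codiscrete_sin_ne_zero] with t ht
    rw [log_abs, log_mul two_ne_zero ht]
  have hsin : IntervalIntegrable (fun t => log (sin t)) volume a b := intervalIntegrable_log_sin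
  rw [integral_congr_codiscrete h, integral_add intervalIntegrable_const hsin,
    intervalIntegral.integral_const, smul_eq_mul]

theorem integral_log_abs_two_mul_sin_eq_lobachevsky_sub (a b : ℝ) :
    ∫ t in a..b, log |2 * sin t| = lobachevsky a - lobachevsky b := by
  rw [lobachevsky, lobachevsky, ← integral_interval_sub_left (a := 0)
    (intervalIntegrable_log_abs_two_mul_sin _ _) (intervalIntegrable_log_abs_two_mul_sin _ _)]
  ring

theorem lobachevsky_eq_neg_integral_log_sin (θ : ℝ) :
    lobachevsky θ = -(θ * log 2) - ∫ t in 0..θ, log (sin t) := by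
  rw [lobachevsky, integral_log_abs_two_mul_sin, sub_zero]
  ring

theorem lobachevsky_pi_div_two : lobachevsky (π / 2) = 0 := by
  rw [lobachevsky_eq_neg_integral_log_sin, integral_log_sin_zero_pi_div_two]
  ring

theorem lobachevsky_pi : lobachevsky π = 0 := by
  rw [lobachevsky_eq_neg_integral_log_sin, integral_log_sin_zero_pi]
  ring

theorem lobachevsky_neg (θ : ℝ) : lobachevsky (-θ) = -lobachevsky θ := by
  have h := integral_comp_neg (a := 0) (b := θ) fun t => log |2 * sin t|
  simp only [sin_neg, mul_neg, abs_neg, neg_zero] at h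
  rw [lobachevsky, lobachevsky, h, integral_symm (-θ) 0]

theorem lobachevsky_add_pi (θ : ℝ) : lobachevsky (θ + π) = lobachevsky θ := by
  have hper : Function.Periodic (fun t => log |2 * sin t|) π := fun t => by
    simp only [sin_add_pi, mul_neg, abs_neg]
  rw [eq_comm, ← sub_eq_zero, ← integral_log_abs_two_mul_sin_eq_lobachevsky_sub,
    hper.intervalIntegral_add_eq θ 0, zero_add]
  exact neg_eq_zero.mp lobachevsky_pi

theorem log_abs_two_mul_sin_two_mul {t : ℝ} (hs : sin t ≠ 0) (hc : cos t ≠ 0) :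
    log |2 * sin (2 * t)| = log |2 * sin t| + log |2 * sin (t + π / 2)| := by
  rw [sin_add_pi_div_two, ← log_mul (by simpa using hs) (by simpa using hc), ← abs_mul, sin_two_mul]
  ring_nf

theorem lobachevsky_two_mul (θ : ℝ) :
    lobachevsky (2 * θ) = 2 * lobachevsky θ + 2 * lobachevsky (θ + π / 2) := by
  have hdup : (fun t => log |2 * sin (2 * t)|) =ᶠ[Filter.codiscrete ℝ]
      fun t => log |2 * sin t| + log |2 * sin (t + π / 2)| := by
    filter_upwards [eventually_codiscrete_sin_ne_zero, eventually_codiscrete_cos_ne_zero]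
      with t hs hc
    exact log_abs_two_mul_sin_two_mul hs hc
  have hshift : ∫ t in 0..θ, log |2 * sin (t + π / 2)| = -lobachevsky (θ + π / 2) := by
    rw [integral_comp_add_right (fun t => log |2 * sin t|), zero_add,
      integral_log_abs_two_mul_sin_eq_lobachevsky_sub, lobachevsky_pi_div_two, zero_sub]
  have hshift_int : IntervalIntegrable (fun t => log |2 * sin (t + π / 2)|) volume 0 θ := by
    simpa only [sub_self, add_sub_cancel_right] using
      (intervalIntegrable_log_abs_two_mul_sin (π / 2) (θ + π / 2)).comp_add_right (π / 2)
  calc lobachevsky (2 * θ) = -(2 * ∫ t in 0..θ, log |2 * sin (2 * t)|) := by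
        rw [integral_comp_mul_left (fun t => log |2 * sin t|) two_ne_zero, mul_zero, smul_eq_mul,
          mul_inv_cancel_left₀ two_ne_zero, lobachevsky]
    _ = 2 * lobachevsky θ + 2 * lobachevsky (θ + π / 2) := by
      rw [integral_congr_codiscrete hdup,
        integral_add (intervalIntegrable_log_abs_two_mul_sin _ _) hshift_int, hshift]
      unfold lobachevsky
      ring

/-- `Λ(π/6) = (3/2)·Λ(π/3)`. -/
theorem lobachevsky_pi_div_six :
    lobachevsky (π / 6) = (3 / 2) * lobachevsky (π / 3) := by
  have h := lobachevsky_two_mul (π / 6)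
  rw [show 2 * (π / 6) = π / 3 by ring, show π / 6 + π / 2 = -(π / 3) + π by ring,
    lobachevsky_add_pi, lobachevsky_neg] at h
  linarith
end
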